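/- arXiv:2308.16337 — 2 statements merged into one kernel-verified Lean document; each statement's English description precedes it below -/
import Mathlib

section
/- Let q ∈ ℝ with 0 ≤ q < 1, and let a, b : ℕ → ℂ satisfy Σ_n [n]_q! |a_n|² < ∞ and Σ_n [n]_q! |b_n|² < ∞. Then the series Σ_{n=0}^∞ [n]_q! · [n+1]_q · a_{n+1} · conj(b_n) and Σ_{n=1}^∞ [n]_q! · a_n · conj(b_{n−1}) converge absolutely and are equal; that is, ⟨R_q a, b⟩_{H_{2,q}} = ⟨a, M_z b⟩_{H_{2,q}}, so the adjoint of R_q in the q-Fock space H_{2,q} is the multiplication operator M_z. -/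
open Finset

/-- q-bracket `[n]_q = 1 + q + ⋯ + q^(n-1)` (real version). -/
noncomputable def qBracket (q : ℝ) (n : ℕ) : ℝ := ∑ j ∈ Finset.range n, q ^ j

/-- q-factorial `[n]_q! = [1]_q [2]_q ⋯ [n]_q`, with `[0]_q! = 1`. -/
noncomputable def qFact (q : ℝ) (n : ℕ) : ℝ := ∏ i ∈ Finset.range n, qBracket q (i + 1)

/-- The q-backward-shift on coefficient sequences: `(R_q a)_n = [n+1]_q a_(n+1)`. -/
noncomputable def Rq (q : ℝ) (a : ℕ → ℂ) : ℕ → ℂ := fun n => (qBracket q (n + 1) : ℂ) * a (n + 1)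

/-- Multiplication by `z` on coefficient sequences. -/
def Mz (b : ℕ → ℂ) : ℕ → ℂ := fun n => if n = 0 then 0 else b (n - 1)

/-! The inner products `⟨R_q a, b⟩` and `⟨a, M_z b⟩` have the same terms up to an index shift,
since `[n]_q! [n+1]_q = [n+1]_q!`. Absolute convergence follows from AM–GM together with
`[n+1]_q! ≤ (1 - q)⁻¹ [n]_q!`, which bounds the terms by those of the two norm series. -/

theorem summable_weight_succ_mul_mul {w x y : ℕ → ℝ} {C : ℝ} (hw : ∀ n, 0 ≤ w n)
    (hwC : ∀ n, w (n + 1) ≤ C * w n) (hx : ∀ n, 0 ≤ x n) (hy : ∀ n, 0 ≤ y n)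
    (hxs : Summable fun n => w n * x n ^ 2) (hys : Summable fun n => w n * y n ^ 2) :
    Summable fun n => w (n + 1) * (x (n + 1) * y n) := by
  refine Summable.of_nonneg_of_le (fun n => mul_nonneg (hw _) (mul_nonneg (hx _) (hy n)))
    (fun n => ?_)
    ((((summable_nat_add_iff 1).2 hxs).add (hys.mul_left C)).div_const 2)
  have amgm : x (n + 1) * y n ≤ (x (n + 1) ^ 2 + y n ^ 2) / 2 := by
    nlinarith [sq_nonneg (x (n + 1) - y n)]
  have hyC : w (n + 1) * y n ^ 2 ≤ C * (w n * y n ^ 2) := by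
    rw [← mul_assoc]; exact mul_le_mul_of_nonneg_right (hwC n) (sq_nonneg _)
  calc w (n + 1) * (x (n + 1) * y n)
      ≤ w (n + 1) * ((x (n + 1) ^ 2 + y n ^ 2) / 2) := mul_le_mul_of_nonneg_left amgm (hw _)
    _ ≤ (w (n + 1) * x (n + 1) ^ 2 + C * (w n * y n ^ 2)) / 2 := by linarith

theorem qBracket_nonneg {q : ℝ} (hq0 : 0 ≤ q) (n : ℕ) : 0 ≤ qBracket q n :=
  Finset.sum_nonneg fun i _ => pow_nonneg hq0 i

theorem qFact_nonneg {q : ℝ} (hq0 : 0 ≤ q) (n : ℕ) : 0 ≤ qFact q n :=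
  Finset.prod_nonneg fun _ _ => qBracket_nonneg hq0 _

theorem qBracket_le_inv_one_sub {q : ℝ} (hq0 : 0 ≤ q) (hq1 : q < 1) (n : ℕ) :
    qBracket q n ≤ (1 - q)⁻¹ := by
  rw [← tsum_geometric_of_lt_one hq0 hq1]
  exact (summable_geometric_of_lt_one hq0 hq1).sum_le_tsum _ fun i _ => pow_nonneg hq0 i

theorem qFact_succ (q : ℝ) (n : ℕ) : qFact q (n + 1) = qFact q n * qBracket q (n + 1) :=
  Finset.prod_range_succ _ _

theorem qFact_succ_le {q : ℝ} (hq0 : 0 ≤ q) (hq1 : q < 1) (n : ℕ) :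
    qFact q (n + 1) ≤ (1 - q)⁻¹ * qFact q n := by
  rw [qFact_succ, mul_comm]
  exact mul_le_mul_of_nonneg_right (qBracket_le_inv_one_sub hq0 hq1 _) (qFact_nonneg hq0 n)

theorem qFact_mul_Rq (q : ℝ) (a : ℕ → ℂ) (n : ℕ) :
    (qFact q n : ℂ) * Rq q a n = qFact q (n + 1) * a (n + 1) := by
  rw [Rq, qFact_succ]; push_cast; ring

theorem Mz_zero (b : ℕ → ℂ) : Mz b 0 = 0 := rfl

theorem Mz_succ (b : ℕ → ℂ) (n : ℕ) : Mz b (n + 1) = b n := rfl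

theorem norm_qFact_mul_Rq_mul_conj {q : ℝ} (hq0 : 0 ≤ q) (a b : ℕ → ℂ) (n : ℕ) :
    ‖(qFact q n : ℂ) * Rq q a n * (starRingEnd ℂ) (b n)‖
      = qFact q (n + 1) * (‖a (n + 1)‖ * ‖b n‖) := by
  rw [qFact_mul_Rq, norm_mul, norm_mul, Complex.norm_real, RCLike.norm_conj, Real.norm_eq_abs,
    abs_of_nonneg (qFact_nonneg hq0 _), mul_assoc]

/-- In the q-Fock space `H_{2,q}` (with inner product `⟨a,b⟩ = Σ_n [n]_q! a_n conj(b_n)`),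
for `a, b` with `Σ [n]_q! |a_n|² < ∞`, `Σ [n]_q! |b_n|² < ∞`, the series
`Σ_n [n]_q! [n+1]_q a_(n+1) conj(b_n)` and `Σ_{n≥1} [n]_q! a_n conj(b_(n-1))` converge
absolutely and coincide; i.e. `⟨R_q a, b⟩ = ⟨a, M_z b⟩`, so `R_q* = M_z` in `H_{2,q}`. -/
theorem Rq_adjoint_eq_Mz (q : ℝ) (hq0 : 0 ≤ q) (hq1 : q < 1) (a b : ℕ → ℂ)
    (ha : Summable fun n : ℕ => qFact q n * ‖a n‖ ^ 2)
    (hb : Summable fun n : ℕ => qFact q n * ‖b n‖ ^ 2) :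
    Summable (fun n : ℕ => ‖(qFact q n : ℂ) * Rq q a n * (starRingEnd ℂ) (b n)‖) ∧
    Summable (fun n : ℕ => ‖(qFact q n : ℂ) * a n * (starRingEnd ℂ) (Mz b n)‖) ∧
    ∑' n : ℕ, (qFact q n : ℂ) * Rq q a n * (starRingEnd ℂ) (b n)
      = ∑' n : ℕ, (qFact q n : ℂ) * a n * (starRingEnd ℂ) (Mz b n) := by
  have shift : ∀ n, (qFact q (n + 1) : ℂ) * a (n + 1) * (starRingEnd ℂ) (Mz b (n + 1))
      = qFact q n * Rq q a n * (starRingEnd ℂ) (b n) := fun n => by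
    rw [Mz_succ, qFact_mul_Rq]
  have hRq : Summable fun n => ‖(qFact q n : ℂ) * Rq q a n * (starRingEnd ℂ) (b n)‖ := by
    simpa only [norm_qFact_mul_Rq_mul_conj hq0] using
      summable_weight_succ_mul_mul (qFact_nonneg hq0) (qFact_succ_le hq0 hq1)
        (fun n => norm_nonneg (a n)) (fun n => norm_nonneg (b n)) ha hb
  have hMz : Summable fun n => ‖(qFact q n : ℂ) * a n * (starRingEnd ℂ) (Mz b n)‖ :=
    (summable_nat_add_iff 1).1 (by simpa only [shift] using hRq)
  refine ⟨hRq, hMz, ?_⟩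
  rw [hMz.of_norm.tsum_eq_zero_add, Mz_zero, map_zero, mul_zero, zero_add]
  exact tsum_congr fun n => (shift n).symm
end

section
/- Let q ∈ ℝ with 0 ≤ q < 1 and let w : ℕ → ℝ with w_n > 0 for all n. Suppose that for all finitely supported sequences a, b : ℕ → ℂ one has Σ_n w_n (R_q a)_n conj(b_n) = Σ_n w_n a_n conj((M_z b)_n). Then w_n = w_0 · [n]_q! for every n ≥ 0. In other words, up to a positive multiplicative constant on the inner product, the q-Fock space H_{2,q} is the only weighted ℓ²-space of power series coefficients in which R_q* = M_z. -/
/-! Testing the adjoint relation on the basis vectors `a = e_(n+1)`, `b = e_n` gives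
`w_n [n+1]_q = w_(n+1)`, since `R_q e_(n+1) = [n+1]_q e_n` and `M_z e_n = e_(n+1)`;
the claim follows by induction. -/

open Finset

theorem Rq_single_succ (q : ℝ) (n : ℕ) (c : ℂ) :
    Rq q (Pi.single (n + 1) c) = Pi.single n ((qBracket q (n + 1) : ℂ) * c) := by
  ext m
  rcases eq_or_ne m n with rfl | hm
  · simp [Rq]
  · simp [Rq, hm]

theorem Mz_single (n : ℕ) (c : ℂ) : Mz (Pi.single n c) = Pi.single (n + 1) c := by
  ext m
  rcases m with _ | m
  · simp [Mz]
  · simp [Mz, Pi.single_apply]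

theorem finite_support_single {ι M : Type*} [DecidableEq ι] [Zero M] (i : ι) (c : M) :
    (Function.support (Pi.single i c)).Finite :=
  (Set.finite_singleton i).subset Pi.support_single_subset

theorem tsum_weight_mul_single_mul_conj_single {ι : Type*} [DecidableEq ι] (w : ι → ℝ) (i : ι)
    (c d : ℂ) :
    ∑' n, (w n : ℂ) * (Pi.single i c : ι → ℂ) n * starRingEnd ℂ ((Pi.single i d : ι → ℂ) n) =
      w i * c * starRingEnd ℂ d := by
  rw [tsum_eq_single i fun n hn => by simp [hn]]
  simp

theorem eq_mul_qFact_of_succ {q : ℝ} {w : ℕ → ℝ}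
    (h : ∀ n, w (n + 1) = w n * qBracket q (n + 1)) : ∀ n, w n = w 0 * qFact q n
  | 0 => by simp [qFact]
  | n + 1 => by rw [h, eq_mul_qFact_of_succ h n, qFact_succ, mul_assoc]

theorem qFock_unique_Rq_adjoint_Mz_general (q : ℝ)
    (w : ℕ → ℝ)
    (hadj : ∀ a b : ℕ → ℂ, (Function.support a).Finite → (Function.support b).Finite →
      ∑' n : ℕ, (w n : ℂ) * Rq q a n * (starRingEnd ℂ) (b n)
        = ∑' n : ℕ, (w n : ℂ) * a n * (starRingEnd ℂ) (Mz b n)) :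
    ∀ n : ℕ, w n = w 0 * qFact q n := by
  refine eq_mul_qFact_of_succ fun n => ?_
  have h := hadj (Pi.single (n + 1) 1) (Pi.single n 1)
    (finite_support_single _ _) (finite_support_single _ _)
  rw [Rq_single_succ, Mz_single, tsum_weight_mul_single_mul_conj_single,
    tsum_weight_mul_single_mul_conj_single] at h
  simp only [mul_one, map_one] at h
  exact_mod_cast h.symm

/-- Uniqueness: if a positive weight `w` on ℕ satisfies
`Σ_n w_n (R_q a)_n conj(b_n) = Σ_n w_n a_n conj((M_z b)_n)` for all finitely supported
`a, b`, then `w_n = w_0 [n]_q!`: up to a positive multiplicative constant, `H_{2,q}` is the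
only weighted ℓ²-space of power series coefficients in which `R_q* = M_z`. -/
theorem qFock_unique_Rq_adjoint_Mz (q : ℝ) (hq0 : 0 ≤ q) (hq1 : q < 1)
    (w : ℕ → ℝ) (hw : ∀ n, 0 < w n)
    (hadj : ∀ a b : ℕ → ℂ, (Function.support a).Finite → (Function.support b).Finite →
      ∑' n : ℕ, (w n : ℂ) * Rq q a n * (starRingEnd ℂ) (b n)
        = ∑' n : ℕ, (w n : ℂ) * a n * (starRingEnd ℂ) (Mz b n)) :
    ∀ n : ℕ, w n = w 0 * qFact q n :=
  qFock_unique_Rq_adjoint_Mz_general q w hadj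
end
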